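/- arXiv:1806.00629 — 6 statements merged into one kernel-verified Lean document; each statement's English description precedes it below -/
import Mathlib

section
/- Let F be an uncountable algebraically closed field with prime subfield F₀, let X ⊆ F be a transcendence basis of F over F₀, and let X₀ be a countably infinite subset of X. Let K denote the set of elements of F that are algebraic over the subfield F₀(X₀) generated by F₀ and X₀ (so K is the algebraic closure of F₀(X₀) inside F). Then for every finite collection α₁,…,α_n of elements of F there exists a field automorphism σ of F such that σ(α_i) ∈ K for all i = 1,…,n. -/
set_option maxHeartbeats 1000000
set_option synthInstance.maxHeartbeats 400000

open Polynomial in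
/-- If there is a nonzero polynomial over `F` with coefficients in a subfield `K`
killing `a`, then `a` is algebraic over `K`. -/
private lemma isAlg_of_poly {F : Type} [Field F] (K : Subfield F) {a : F}
    (p : Polynomial F) (hp0 : p ≠ 0) (hc : ∀ k, p.coeff k ∈ K) (hev : p.eval a = 0) :
    IsAlgebraic K a := by
  classical
  set q : Polynomial K := ∑ k ∈ p.support, Polynomial.C (⟨p.coeff k, hc k⟩ : K) * Polynomial.X ^ k
    with hq
  have hmap : q.map (algebraMap K F) = p := by
    rw [hq, Polynomial.map_sum]
    conv_rhs => rw [p.as_sum_support]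
    refine Finset.sum_congr rfl fun k _ => ?_
    rw [Polynomial.map_mul, Polynomial.map_C, Polynomial.map_pow, Polynomial.map_X,
      Polynomial.C_mul_X_pow_eq_monomial]
    rfl
  refine ⟨q, ?_, ?_⟩
  · intro h
    apply hp0
    rw [← hmap, h, Polynomial.map_zero]
  · rw [Polynomial.aeval_def, Polynomial.eval₂_eq_eval_map, hmap, hev]

private lemma mem_closure_finset {F : Type} [Field F] {X : Set F} {x : F}
    (hx : x ∈ Subfield.closure X) :
    ∃ t : Finset F, ↑t ⊆ X ∧ x ∈ Subfield.closure (↑t : Set F) := by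
  classical
  induction hx using Subfield.closure_induction with
  | mem y hy => exact ⟨{y}, by simpa using hy, Subfield.subset_closure (by simp)⟩
  | one => exact ⟨∅, by simp, one_mem _⟩
  | add y z hy hz h1 h2 =>
    obtain ⟨a, haX, ha⟩ := h1
    obtain ⟨b, hbX, hb⟩ := h2
    refine ⟨a ∪ b, by rw [Finset.coe_union]; exact Set.union_subset haX hbX, ?_⟩
    exact add_mem (Subfield.closure_mono (by simp) ha) (Subfield.closure_mono (by simp) hb)
  | neg y hy h1 =>
    obtain ⟨a, haX, ha⟩ := h1
    exact ⟨a, haX, neg_mem ha⟩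
  | inv y hy h1 =>
    obtain ⟨a, haX, ha⟩ := h1
    exact ⟨a, haX, inv_mem ha⟩
  | mul y z hy hz h1 h2 =>
    obtain ⟨a, haX, ha⟩ := h1
    obtain ⟨b, hbX, hb⟩ := h2
    refine ⟨a ∪ b, by rw [Finset.coe_union]; exact Set.union_subset haX hbX, ?_⟩
    exact mul_mem (Subfield.closure_mono (by simp) ha) (Subfield.closure_mono (by simp) hb)

/-- Conversely, an element algebraic over some subring of `F` is killed by a
nonzero polynomial over `F` with coefficients in the image of that subring. -/
private lemma poly_of_isAlg {F R : Type*} [Field F] [CommRing R] [Algebra R F]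
    (hinj : Function.Injective (algebraMap R F)) {a : F} (h : IsAlgebraic R a) :
    ∃ p : Polynomial F, p ≠ 0 ∧ (∀ k, p.coeff k ∈ Set.range (algebraMap R F)) ∧
      p.eval a = 0 := by
  obtain ⟨q, hq0, hqa⟩ := h
  refine ⟨q.map (algebraMap R F), ?_, ?_, ?_⟩
  · exact (Polynomial.map_ne_zero_iff hinj).mpr hq0
  · intro k
    rw [Polynomial.coeff_map]
    exact ⟨q.coeff k, rfl⟩
  · rw [Polynomial.eval_map, ← Polynomial.aeval_def, hqa]

/-- Let `F` be an uncountable algebraically closed field, `X` a transcendence basis of `F`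
over its prime subfield `F₀ = ⊥`, and `X₀ ⊆ X` a countably infinite subset.  Then any finite
collection `α₁,…,α_n` of elements of `F` can be moved, by some field automorphism `σ` of `F`,
into the algebraic closure `K` of `F₀(X₀)` inside `F`, i.e. each `σ (α i)` is algebraic over
the subfield generated by `X₀` (which contains the prime subfield). -/
theorem exists_automorphism_mapping_into_algClosure_of_countable_subbasis
    (F : Type) [Field F] [IsAlgClosed F] (hF : ¬ Countable F)
    (X : Set F) (hX : IsTranscendenceBasis (⊥ : Subfield F) (Subtype.val : X → F))
    (X₀ : Set F) (hX₀X : X₀ ⊆ X) (hX₀c : X₀.Countable) (hX₀i : X₀.Infinite)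
    (n : ℕ) (α : Fin n → F) :
    ∃ σ : F ≃+* F, ∀ i : Fin n, IsAlgebraic (Subfield.closure X₀) (σ (α i)) := by
  classical
  have hXinf : X.Infinite := hX₀i.mono hX₀X
  -- F is algebraic over the subalgebra generated by X
  haveI halgF : Algebra.IsAlgebraic
      (Algebra.adjoin (⊥ : Subfield F) (Set.range (Subtype.val : X → F))) F :=
    hX.isAlgebraic
  -- the subalgebra generated by X is contained in the subfield generated by X
  have hAsub : ∀ a, a ∈ Algebra.adjoin (⊥ : Subfield F) (Set.range (Subtype.val : X → F)) →
      a ∈ Subfield.closure X := by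
    intro a ha
    induction ha using Algebra.adjoin_induction with
    | mem x hx => exact Subfield.subset_closure (by rwa [Subtype.range_coe] at hx)
    | algebraMap r => exact (bot_le : (⊥ : Subfield F) ≤ Subfield.closure X) r.2
    | add x y hx hy h1 h2 => exact add_mem h1 h2
    | mul x y hx hy h1 h2 => exact mul_mem h1 h2
  -- Step 1 : each `α i` is killed by a nonzero polynomial with coefficients in `closure X`
  have step1 : ∀ i : Fin n, ∃ p : Polynomial F, p ≠ 0 ∧
      (∀ k, p.coeff k ∈ Subfield.closure X) ∧ p.eval (α i) = 0 := by
    intro i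
    have hinj : Function.Injective (algebraMap (Algebra.adjoin (⊥ : Subfield F)
        (Set.range (Subtype.val : X → F))) F) := fun a b h => Subtype.ext h
    obtain ⟨p, hp0, hpc, hpe⟩ := poly_of_isAlg hinj (halgF.isAlgebraic (α i))
    refine ⟨p, hp0, fun k => ?_, hpe⟩
    obtain ⟨r, hr⟩ := hpc k
    exact hr ▸ hAsub _ r.2
  choose p hp0 hpc hpe using step1
  choose t ht1 ht2 using fun (i : Fin n) (k : ℕ) => mem_closure_finset (hpc i k)
  -- the finite set `Y ⊆ X` containing all relevant coefficients' generators
  set Y : Finset F :=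
    Finset.univ.biUnion (fun i : Fin n => (p i).support.biUnion (fun k => t i k)) with hY
  have hYX : (↑Y : Set F) ⊆ X := by
    intro y hy
    simp only [hY, Finset.coe_biUnion, Finset.mem_coe, Set.mem_iUnion, Finset.mem_univ,
      Set.iUnion_true, Finset.mem_biUnion] at hy
    obtain ⟨i, ⟨k, _, hk⟩⟩ := hy
    exact ht1 i k hk
  have hcoeff : ∀ i k, (p i).coeff k ∈ Subfield.closure (↑Y : Set F) := by
    intro i k
    by_cases hk : k ∈ (p i).support
    · refine Subfield.closure_mono ?_ (ht2 i k)
      intro z hz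
      simp only [hY, Finset.coe_biUnion, Finset.mem_coe, Set.mem_iUnion, Finset.mem_univ,
        Set.iUnion_true, Finset.mem_biUnion]
      exact ⟨i, k, hk, hz⟩
    · rw [Polynomial.notMem_support_iff.mp hk]
      exact zero_mem _
  -- Step 3 : a permutation of X moving Y into X₀
  obtain ⟨s, hsX₀, hscard⟩ := hX₀i.exists_subset_card_eq Y.card
  have f : ((↑Y : Set F) ≃ (↑s : Set F)) := Finset.equivOfCardEq hscard.symm
  have hsX : (↑s : Set F) ⊆ X := hsX₀.trans hX₀X
  have hXcard : ∀ u : Finset F, (↑u : Set F) ⊆ X →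
      Cardinal.mk ↥(X \ ↑u : Set F) = Cardinal.mk ↥X := by
    intro u hu
    have h1 := Cardinal.mk_diff_add_mk hu
    have hXa : Cardinal.aleph0 ≤ Cardinal.mk ↥X := by
      rw [Cardinal.aleph0_le_mk_iff, Set.infinite_coe_iff]; exact hXinf
    have hufin : Cardinal.mk ↥(↑u : Set F) < Cardinal.aleph0 :=
      Cardinal.mk_lt_aleph0_iff.mpr u.finite_toSet.to_subtype
    have h2 : Cardinal.aleph0 ≤ Cardinal.mk ↥(X \ ↑u : Set F) := by
      by_contra hlt
      push_neg at hlt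
      have := Cardinal.add_lt_aleph0 hlt hufin
      rw [h1] at this
      exact absurd this (not_lt.mpr hXa)
    rw [← h1, Cardinal.add_eq_left h2 (le_trans hufin.le h2)]
  obtain ⟨g⟩ : Nonempty ((X \ ↑Y : Set F) ≃ (X \ ↑s : Set F)) := Cardinal.eq.mp
    (by rw [hXcard Y hYX, hXcard s hsX])
  let e : ↥X ≃ ↥X :=
    (Equiv.Set.sumDiffSubset hYX).symm.trans ((f.sumCongr g).trans (Equiv.Set.sumDiffSubset hsX))
  have he : ∀ (x : ↥X) (hx : (x : F) ∈ (↑Y : Set F)), ((e x : F)) ∈ X₀ := by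
    intro x hx
    have h1 : (Equiv.Set.sumDiffSubset hYX).symm x = Sum.inl ⟨(x : F), hx⟩ :=
      Equiv.Set.sumDiffSubset_symm_apply_of_mem hYX hx
    have h2 : e x = Set.inclusion hsX (f ⟨(x : F), hx⟩) := by
      simp only [e, Equiv.trans_apply, h1, Equiv.sumCongr_apply, Sum.map_inl,
        Equiv.Set.sumDiffSubset_apply_inl]
    rw [h2]
    exact hsX₀ (f ⟨(x : F), hx⟩).2
  -- Step 4 : the automorphism σ extending the permutation e of X
  haveI := IsAlgClosed.isAlgClosure_of_transcendence_basis (Subtype.val : X → F) hX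
  let ψ : MvPolynomial ↥X (⊥ : Subfield F) ≃ₐ[(⊥ : Subfield F)]
      MvPolynomial ↥X (⊥ : Subfield F) := MvPolynomial.renameEquiv _ e
  let φ : Algebra.adjoin (⊥ : Subfield F) (Set.range (Subtype.val : X → F)) ≃+*
      Algebra.adjoin (⊥ : Subfield F) (Set.range (Subtype.val : X → F)) :=
    hX.1.aevalEquiv.symm.toRingEquiv.trans (ψ.toRingEquiv.trans hX.1.aevalEquiv.toRingEquiv)
  let σ : F ≃+* F := IsAlgClosure.equivOfEquiv F F φ
  have hσ : ∀ x : ↥X, σ (x : F) = ((e x : F)) := by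
    intro x
    have h1 : (algebraMap (Algebra.adjoin (⊥ : Subfield F)
        (Set.range (Subtype.val : X → F))) F) (hX.1.aevalEquiv (MvPolynomial.X x)) = (x : F) := by
      rw [hX.1.algebraMap_aevalEquiv, MvPolynomial.aeval_X]
    have h2 : φ (hX.1.aevalEquiv (MvPolynomial.X x)) =
        hX.1.aevalEquiv (MvPolynomial.X (e x)) := by
      simp only [φ, ψ, RingEquiv.trans_apply, AlgEquiv.toRingEquiv_eq_coe,
        AlgEquiv.coe_ringEquiv, AlgEquiv.symm_apply_apply, MvPolynomial.renameEquiv_apply,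
        MvPolynomial.rename_X]
    rw [← h1, IsAlgClosure.equivOfEquiv_algebraMap, h2, hX.1.algebraMap_aevalEquiv,
      MvPolynomial.aeval_X]
  -- Step 5 : conclusion
  have himg : ∀ z ∈ Subfield.closure (↑Y : Set F), σ z ∈ Subfield.closure X₀ := by
    intro z hz
    have hmem : σ z ∈ (Subfield.closure (↑Y : Set F)).map (σ : F →+* F) := ⟨z, hz, rfl⟩
    rw [RingHom.map_field_closure] at hmem
    refine Subfield.closure_mono ?_ hmem
    rintro _ ⟨y, hy, rfl⟩
    have : (σ : F →+* F) y = σ ((⟨y, hYX hy⟩ : ↥X) : F) := rfl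
    rw [this, hσ]
    exact he _ hy
  refine ⟨σ, fun i => ?_⟩
  refine isAlg_of_poly (Subfield.closure X₀) ((p i).map (σ : F →+* F)) ?_ ?_ ?_
  · exact (Polynomial.map_ne_zero_iff σ.injective).mpr (hp0 i)
  · intro k
    rw [Polynomial.coeff_map]
    exact himg _ (hcoeff i k)
  · rw [Polynomial.eval_map]
    have h := Polynomial.eval₂_hom (σ : F →+* F) (α i) (p := p i)
    rw [hpe i, map_zero] at h
    exact h
end

section
/- Let F be an uncountable algebraically closed field with prime subfield F₀, let X ⊆ F be a transcendence basis of F over F₀, let X₀ ⊆ X be countably infinite, and let K be the subfield of all elements of F algebraic over F₀(X₀). Then for every finitely presented F-algebra B there exist a field automorphism σ of F, a natural number m, a finite set R of elements of the free algebra F⟨x₁,…,x_m⟩ all of whose coefficients lie in K, and a σ-semilinear isomorphism from B to the quotient of F⟨x₁,…,x_m⟩ by the two-sided ideal generated by R. -/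
/-!
Only the finitely many coefficients of the relations matter. The algebraic matroid of `F`
over its prime field is finitary, so these coefficients are algebraic over `F₀(I)` for a
finite `I ⊆ X`. As `X₀` is infinite, some permutation of `X` moves `I` into `X₀`, and since
`F` is an algebraic closure of `F₀(X)` that permutation extends to an automorphism `σ` of `F`.
Applying `σ` to the coefficients is a `σ`-semilinear automorphism of the free algebra, which
descends to the quotients by the relations and by their images.
-/

abbrev FreePresQuot (F : Type) [Field F] (m : ℕ) (R : Set (FreeAlgebra F (Fin m))) : Type :=
  (TwoSidedIdeal.span R).ringCon.Quotient

def IsFinitelyPresentedAlgebra (F : Type) [Field F] (A : Type) [Ring A] [Algebra F A] : Prop :=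
  ∃ (m : ℕ) (R : Finset (FreeAlgebra F (Fin m))),
    Nonempty (A ≃ₐ[F] FreePresQuot F m (R : Set (FreeAlgebra F (Fin m))))

def IsSemilinearIso (F : Type) [Field F] (σ : F ≃+* F)
    (A B : Type) [Ring A] [Ring B] [Algebra F A] [Algebra F B] : Prop :=
  ∃ φ : A ≃+* B, ∀ (c : F) (a : A), φ (c • a) = σ c • φ a

namespace IsAlgClosed

variable {R K L ι κ : Type*} [CommRing R] [Field K] [Algebra R K] [Field L] [Algebra R L]
  [IsAlgClosed K] [IsAlgClosed L] {v : ι → K} {w : κ → L} (e : ι ≃ κ)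
  (hv : IsTranscendenceBasis R v) (hw : IsTranscendenceBasis R w)

theorem equivOfTranscendenceBasis_apply (i : ι) :
    equivOfTranscendenceBasis v w e hv hw (v i) = w (e i) := by
  have := isAlgClosure_of_transcendence_basis v hv
  have := isAlgClosure_of_transcendence_basis w hw
  have hsymm :
      hv.1.aevalEquiv.symm ⟨v i, Algebra.subset_adjoin ⟨i, rfl⟩⟩ = MvPolynomial.X i := by
    rw [AlgEquiv.symm_apply_eq]
    ext
    simp
  unfold equivOfTranscendenceBasis
  refine (IsAlgClosure.equivOfEquiv_algebraMap K L _
    (⟨v i, Algebra.subset_adjoin ⟨i, rfl⟩⟩ : Algebra.adjoin R (Set.range v))).trans ?_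
  simp [hsymm]

theorem equivOfTranscendenceBasis_algebraMap (r : R) :
    equivOfTranscendenceBasis v w e hv hw (algebraMap R K r) = algebraMap R L r := by
  have := isAlgClosure_of_transcendence_basis v hv
  have := isAlgClosure_of_transcendence_basis w hw
  unfold equivOfTranscendenceBasis
  refine (IsAlgClosure.equivOfEquiv_algebraMap K L _
    (algebraMap R (Algebra.adjoin R (Set.range v)) r)).trans ?_
  simp

end IsAlgClosed

theorem IsTranscendenceBasis.exists_algEquiv_apply_eq {R K ι : Type*} [CommRing R] [Field K]
    [Algebra R K] [IsAlgClosed K] {v : ι → K} (hv : IsTranscendenceBasis R v)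
    (e : Equiv.Perm ι) : ∃ σ : K ≃ₐ[R] K, ∀ i, σ (v i) = v (e i) :=
  ⟨.ofRingEquiv (IsAlgClosed.equivOfTranscendenceBasis_algebraMap e hv hv),
    IsAlgClosed.equivOfTranscendenceBasis_apply e hv hv⟩

theorem Set.Finite.exists_perm_mapsTo {α : Type*} {s t : Set α} (hs : s.Finite)
    (ht : t.Infinite) : ∃ e : Equiv.Perm α, Set.MapsTo e s t := by
  have := hs.to_subtype
  have := ht.to_subtype
  obtain ⟨f⟩ : Nonempty (s ↪ t) := Cardinal.le_def _ _ |>.1 <|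
    (Cardinal.lt_aleph0_of_finite s).le.trans (Cardinal.aleph0_le_mk t)
  obtain ⟨e, he⟩ := Equiv.Perm.exists_extending_pair (Subtype.val : s → α)
    (fun x ↦ (f x : α)) Subtype.val_injective (Subtype.val_injective.comp f.injective)
  exact ⟨e, fun x hx ↦ he ⟨x, hx⟩ ▸ (f ⟨x, hx⟩).2⟩

theorem IsAlgebraic.algEquiv_apply_adjoin_image {R A : Type*} [CommRing R] [CommRing A]
    [Algebra R A] (σ : A ≃ₐ[R] A) {s : Set A} {x : A}
    (h : IsAlgebraic (Algebra.adjoin R s) x) : IsAlgebraic (Algebra.adjoin R (σ '' s)) (σ x) := by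
  have hmem (a : Algebra.adjoin R s) : σ a ∈ Algebra.adjoin R (σ '' s) :=
    (AlgHom.map_adjoin (σ : A →ₐ[R] A) s).le ⟨a, a.2, rfl⟩
  exact h.ringHom_of_comp_eq ((σ.toAlgHom.comp (Algebra.adjoin R s).val).codRestrict _ hmem)
    σ (fun a b hab ↦ Subtype.ext (σ.injective (congrArg Subtype.val hab))) rfl

theorem IsTranscendenceBasis.exists_algEquiv_isAlgebraic_adjoin {R K : Type*} [CommRing R]
    [Field K] [Algebra R K] [FaithfulSMul R K] [IsAlgClosed K] {X X₀ C : Set K}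
    (hX : IsTranscendenceBasis R ((↑) : X → K)) (hX₀X : X₀ ⊆ X) (hX₀ : X₀.Infinite)
    (hC : C.Finite) :
    ∃ σ : K ≃ₐ[R] K, ∀ c ∈ C, IsAlgebraic (Algebra.adjoin R X₀) (σ c) := by
  obtain ⟨I, hIX, hI, -, hCI⟩ :=
    (AlgebraicIndependent.matroid R K).exists_subset_finite_closure_of_subset_closure hC
      (Y := X) (by simp [(AlgebraicIndependent.matroid_isBase_iff.2 hX).closure_eq])
  rw [AlgebraicIndependent.matroid_closure_eq] at hCI
  obtain ⟨e, he⟩ := (hI.preimage Subtype.val_injective.injOn).exists_perm_mapsTo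
    (hX₀.preimage (Subtype.range_coe (s := X) ▸ hX₀X))
  obtain ⟨σ, hσ⟩ := hX.exists_algEquiv_apply_eq e
  refine ⟨σ, fun c hc ↦ ((hCI hc).algEquiv_apply_adjoin_image σ).tower_top_of_subalgebra_le
    (Algebra.adjoin_mono ?_)⟩
  rintro _ ⟨x, hx, rfl⟩
  rw [show x = ((⟨x, hIX hx⟩ : X) : K) from rfl, hσ]
  exact he hx

theorem IsAlgebraic.subfieldClosure_of_adjoin_bot {F : Type*} [Field F] {s : Set F} {x : F}
    (h : IsAlgebraic (Algebra.adjoin (⊥ : Subfield F) s) x) :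
    IsAlgebraic (Subfield.closure s) x := by
  have hle :
      (Algebra.adjoin (⊥ : Subfield F) s).toSubring ≤ (Subfield.closure s).toSubring := by
    rw [Algebra.adjoin_eq_ring_closure, Subring.closure_le]
    refine Set.union_subset ?_ Subfield.subset_closure
    rintro _ ⟨r, rfl⟩
    exact (bot_le : ⊥ ≤ Subfield.closure s) r.2
  exact h.ringHom_of_comp_eq (Subring.inclusion hle) (RingHom.id F)
    (Subring.inclusion_injective hle) rfl

namespace FreeAlgebra

variable {R S X : Type*} [CommRing R] [CommRing S]

noncomputable def mapCoeffs (σ : R ≃+* S) : FreeAlgebra R X ≃+* FreeAlgebra S X :=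
  equivMonoidAlgebraFreeMonoid.toRingEquiv.trans
    ((MonoidAlgebra.mapRingEquiv _ σ).trans equivMonoidAlgebraFreeMonoid.symm.toRingEquiv)

theorem basisFreeMonoid_repr_mapCoeffs (σ : R ≃+* S) (r : FreeAlgebra R X) (w : FreeMonoid X) :
    (basisFreeMonoid S X).repr (mapCoeffs σ r) w = σ ((basisFreeMonoid R X).repr r w) := by
  simp [basisFreeMonoid, mapCoeffs]

theorem mapCoeffs_algebraMap (σ : R ≃+* S) (c : R) :
    mapCoeffs (X := X) σ (algebraMap R _ c) = algebraMap S _ (σ c) := by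
  simp [mapCoeffs, AlgEquiv.symm_apply_eq]

end FreeAlgebra

theorem TwoSidedIdeal.comap_span_image {R S : Type*} [Ring R] [Ring S] (e : R ≃+* S)
    (s : Set R) : comap e (span (e '' s)) = span s := by
  refine le_antisymm (fun x hx ↦ ?_)
    (span_le.2 fun x hx ↦ (mem_comap e).2 (subset_span ⟨x, hx, rfl⟩))
  have hle : span (e '' s) ≤ comap e.symm (span s) := span_le.2 <| by
    rintro _ ⟨y, hy, rfl⟩
    simpa [mem_comap] using subset_span hy
  simpa [mem_comap] using hle ((mem_comap e).1 hx)

theorem isSemilinearIso_quotient_span_image {F A B : Type} [Field F] [Ring A] [Ring B]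
    [Algebra F A] [Algebra F B] (σ : F ≃+* F) (Φ : A ≃+* B)
    (hΦ : ∀ c, Φ (algebraMap F A c) = algebraMap F B (σ c)) (s : Set A) :
    IsSemilinearIso F σ (TwoSidedIdeal.span s).ringCon.Quotient
      (TwoSidedIdeal.span (Φ '' s)).ringCon.Quotient := by
  have hcon : (TwoSidedIdeal.span s).ringCon = (TwoSidedIdeal.span (Φ '' s)).ringCon.comap Φ :=
    RingCon.ext fun x y ↦ by
      rw [RingCon.comap_rel, TwoSidedIdeal.rel_iff, TwoSidedIdeal.rel_iff, ← map_sub,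
        ← TwoSidedIdeal.mem_comap, TwoSidedIdeal.comap_span_image]
  refine ⟨RingCon.congr Φ hcon, fun c a ↦ ?_⟩
  obtain ⟨a, rfl⟩ := RingCon.mk'_surjective _ a
  have : Φ (c • a) = σ c • Φ a := by rw [Algebra.smul_def, Algebra.smul_def, map_mul, hΦ]
  simp only [RingCon.coe_mk', ← RingCon.coe_smul]
  rw [RingCon.congr_mk, RingCon.congr_mk, this, RingCon.coe_smul]

theorem IsSemilinearIso.algEquiv_trans {F A B C : Type} [Field F] [Ring A] [Ring B] [Ring C]
    [Algebra F A] [Algebra F B] [Algebra F C] {σ : F ≃+* F} (ψ : A ≃ₐ[F] B)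
    (h : IsSemilinearIso F σ B C) : IsSemilinearIso F σ A C := by
  obtain ⟨φ, hφ⟩ := h
  exact ⟨ψ.toRingEquiv.trans φ, fun c a ↦ by simp [hφ]⟩

theorem exists_semilinearIso_to_presentation_over_countable_subfield_general
    (F : Type) [Field F] [IsAlgClosed F]
    (X : Set F) (hX : IsTranscendenceBasis (⊥ : Subfield F) (Subtype.val : X → F))
    (X₀ : Set F) (hX₀X : X₀ ⊆ X) (hX₀i : X₀.Infinite)
    (B : Type) [Ring B] [Algebra F B] (hB : IsFinitelyPresentedAlgebra F B) :
    ∃ (σ : F ≃+* F) (m : ℕ) (R : Finset (FreeAlgebra F (Fin m))),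
      (∀ r ∈ R, ∀ w : FreeMonoid (Fin m),
        IsAlgebraic (Subfield.closure X₀) ((FreeAlgebra.basisFreeMonoid F (Fin m)).repr r w)) ∧
      IsSemilinearIso F σ B (FreePresQuot F m (R : Set (FreeAlgebra F (Fin m)))) := by
  classical
  obtain ⟨m, R₀, ⟨ψ⟩⟩ := hB
  obtain ⟨σ, hσ⟩ := hX.exists_algEquiv_isAlgebraic_adjoin hX₀X hX₀i
    (R₀.finite_toSet.biUnion fun r _ ↦
      ((FreeAlgebra.basisFreeMonoid F (Fin m)).repr r).finite_range)
  refine ⟨σ, m, R₀.image (FreeAlgebra.mapCoeffs σ), ?_, ?_⟩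
  · simp only [Finset.mem_image]
    rintro _ ⟨r, hr, rfl⟩ w
    rw [FreeAlgebra.basisFreeMonoid_repr_mapCoeffs]
    exact (hσ _ (Set.mem_biUnion hr ⟨w, rfl⟩)).subfieldClosure_of_adjoin_bot
  · rw [Finset.coe_image]
    exact (isSemilinearIso_quotient_span_image _ _
      (FreeAlgebra.mapCoeffs_algebraMap _) _).algEquiv_trans ψ

/-- Let `F` be an uncountable algebraically closed field, `X` a transcendence basis of `F`
over its prime subfield `F₀ = ⊥`, `X₀ ⊆ X` countably infinite, and `K` the algebraic closure
of `F₀(X₀)` inside `F` (the elements algebraic over the subfield generated by `X₀`).  Then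
every finitely presented `F`-algebra `B` admits a field automorphism `σ` of `F` and a
`σ`-semilinear isomorphism onto a finitely presented `F`-algebra whose defining relations
have all their coefficients (with respect to the monomial basis of the free algebra) in `K`. -/
theorem exists_semilinearIso_to_presentation_over_countable_subfield
    (F : Type) [Field F] [IsAlgClosed F] (hF : ¬ Countable F)
    (X : Set F) (hX : IsTranscendenceBasis (⊥ : Subfield F) (Subtype.val : X → F))
    (X₀ : Set F) (hX₀X : X₀ ⊆ X) (hX₀c : X₀.Countable) (hX₀i : X₀.Infinite)
    (B : Type) [Ring B] [Algebra F B] (hB : IsFinitelyPresentedAlgebra F B) :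
    ∃ (σ : F ≃+* F) (m : ℕ) (R : Finset (FreeAlgebra F (Fin m))),
      (∀ r ∈ R, ∀ w : FreeMonoid (Fin m),
        IsAlgebraic (Subfield.closure X₀) ((FreeAlgebra.basisFreeMonoid F (Fin m)).repr r w)) ∧
      IsSemilinearIso F σ B (FreePresQuot F m (R : Set (FreeAlgebra F (Fin m)))) :=
  exists_semilinearIso_to_presentation_over_countable_subfield_general F X hX X₀ hX₀X hX₀i B hB
end

section
/- Let F be a field, X a type (set of variables), and let r be a nonzero homogeneous element of degree d of the free associative algebra F⟨X⟩ (i.e., an F-linear combination of monomials of length d). If s is a homogeneous element of degree d of F⟨X⟩ lying in the two-sided ideal generated by r, then s = γ·r for some γ ∈ F. -/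
/-!
Let `π_d` be the linear projection of `F⟨X⟩` onto its degree-`d` component. As an `F`-space
the ideal `(r)` is spanned by the products `u * r * v` of `r` with words `u`, `v`; for `r`
homogeneous of degree `d` such a product is homogeneous of degree `|u| + d + |v|`, so `π_d`
kills it unless `u = v = 1`. Hence `s = π_d s ∈ π_d (r) ⊆ F ∙ r`.
-/

/-- The homogeneous component of degree `d` of the free algebra `F⟨X⟩`: the `F`-linear span
of the monomials (products of `d` generators). -/
def homogeneousComponent (F : Type) [Field F] (X : Type) (d : ℕ) :
    Submodule F (FreeAlgebra F X) :=
  Submodule.span F {x | ∃ l : List X, l.length = d ∧ x = (l.map (FreeAlgebra.ι F)).prod}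

theorem TwoSidedIdeal.mem_top_mul_span_singleton_mul_top {R A : Type*} [CommRing R] [Ring A]
    [Algebra R A] {r s : A} (hs : s ∈ TwoSidedIdeal.span {r}) :
    s ∈ (⊤ : Submodule R A) * Submodule.span R {r} * ⊤ := by
  rw [TwoSidedIdeal.mem_span_iff_mem_addSubgroup_closure] at hs
  refine (AddSubgroup.closure_le
    (K := ((⊤ : Submodule R A) * Submodule.span R {r} * ⊤).toAddSubgroup)).2 ?_ hs
  rintro _ ⟨_, ⟨a, -, _, rfl, rfl⟩, b, -, rfl⟩
  exact Submodule.mul_mem_mul (Submodule.mul_mem_mul Submodule.mem_top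
    (Submodule.mem_span_singleton_self _)) Submodule.mem_top

namespace FreeAlgebra

section CommSemiring

variable {R : Type*} [CommSemiring R] {X : Type*}

theorem basisFreeMonoid_ofList (l : List X) :
    basisFreeMonoid R X (FreeMonoid.ofList l) = (l.map (ι R)).prod := by
  simp [basisFreeMonoid, equivMonoidAlgebraFreeMonoid, FreeMonoid.lift_apply]

theorem basisFreeMonoid_one : basisFreeMonoid R X 1 = 1 :=
  basisFreeMonoid_ofList []

variable (R X) in
noncomputable def degreeProj (d : ℕ) : FreeAlgebra R X →ₗ[R] FreeAlgebra R X :=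
  (basisFreeMonoid R X).constr R fun w ↦ if w.length = d then basisFreeMonoid R X w else 0

theorem degreeProj_basisFreeMonoid (d : ℕ) (w : FreeMonoid X) :
    degreeProj R X d (basisFreeMonoid R X w) =
      if w.length = d then basisFreeMonoid R X w else 0 :=
  (basisFreeMonoid R X).constr_basis R _ w

end CommSemiring

variable {F : Type} [Field F] {X : Type}

theorem basisFreeMonoid_mem_homogeneousComponent (w : FreeMonoid X) :
    basisFreeMonoid F X w ∈ homogeneousComponent F X w.length :=
  Submodule.subset_span ⟨w.toList, rfl, basisFreeMonoid_ofList w.toList⟩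

theorem mul_mem_homogeneousComponent {d e : ℕ} {x y : FreeAlgebra F X}
    (hx : x ∈ homogeneousComponent F X d) (hy : y ∈ homogeneousComponent F X e) :
    x * y ∈ homogeneousComponent F X (d + e) := by
  have hxy := Submodule.mul_mem_mul hx hy
  rw [homogeneousComponent, homogeneousComponent, Submodule.span_mul_span] at hxy
  refine Submodule.span_mono ?_ hxy
  rintro _ ⟨_, ⟨l₁, rfl, rfl⟩, _, ⟨l₂, rfl, rfl⟩, rfl⟩
  exact ⟨l₁ ++ l₂, List.length_append, by simp⟩

theorem degreeProj_eq_self_of_mem {d : ℕ} {x : FreeAlgebra F X}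
    (hx : x ∈ homogeneousComponent F X d) : degreeProj F X d x = x := by
  refine (Submodule.span_le (p := LinearMap.eqLocus (degreeProj F X d) LinearMap.id)).2 ?_ hx
  rintro _ ⟨l, rfl, rfl⟩
  simp [← basisFreeMonoid_ofList, degreeProj_basisFreeMonoid, FreeMonoid.length]

theorem degreeProj_eq_zero_of_mem {d e : ℕ} (hne : e ≠ d) {x : FreeAlgebra F X}
    (hx : x ∈ homogeneousComponent F X e) : degreeProj F X d x = 0 := by
  refine (Submodule.span_le (p := LinearMap.ker (degreeProj F X d))).2 ?_ hx
  rintro _ ⟨l, rfl, rfl⟩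
  simp [← basisFreeMonoid_ofList, degreeProj_basisFreeMonoid, FreeMonoid.length, hne]

theorem degreeProj_basisFreeMonoid_mul_mul_mem_span {d : ℕ} {x : FreeAlgebra F X}
    (hx : x ∈ homogeneousComponent F X d) (u v : FreeMonoid X) :
    degreeProj F X d (basisFreeMonoid F X u * x * basisFreeMonoid F X v) ∈
      Submodule.span F {x} := by
  by_cases huv : u = 1 ∧ v = 1
  · obtain ⟨rfl, rfl⟩ := huv
    simp [basisFreeMonoid_one, degreeProj_eq_self_of_mem hx]
  · have hdeg : u.length + d + v.length ≠ d := by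
      rw [← FreeMonoid.length_eq_zero, ← FreeMonoid.length_eq_zero] at huv
      omega
    rw [degreeProj_eq_zero_of_mem hdeg <| mul_mem_homogeneousComponent
      (mul_mem_homogeneousComponent (basisFreeMonoid_mem_homogeneousComponent u) hx)
      (basisFreeMonoid_mem_homogeneousComponent v)]
    exact zero_mem _

theorem top_mul_span_singleton_mul_top_le_comap_degreeProj {d : ℕ} {r : FreeAlgebra F X}
    (hr : r ∈ homogeneousComponent F X d) :
    ⊤ * Submodule.span F {r} * ⊤ ≤ (Submodule.span F {r}).comap (degreeProj F X d) := by
  rw [← (basisFreeMonoid F X).span_eq, Submodule.span_mul_span, Submodule.span_mul_span,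
    Submodule.span_le]
  rintro _ ⟨_, ⟨_, ⟨u, rfl⟩, _, rfl, rfl⟩, _, ⟨v, rfl⟩, rfl⟩
  exact degreeProj_basisFreeMonoid_mul_mul_mem_span hr u v

end FreeAlgebra

theorem homogeneous_mem_span_singleton_general
    (F : Type) [Field F] (X : Type) (d : ℕ) (r s : FreeAlgebra F X)
    (hr : r ∈ homogeneousComponent F X d)
    (hs : s ∈ homogeneousComponent F X d)
    (hmem : s ∈ TwoSidedIdeal.span ({r} : Set (FreeAlgebra F X))) :
    ∃ γ : F, s = γ • r := by
  have hproj : FreeAlgebra.degreeProj F X d s ∈ Submodule.span F {r} :=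
    FreeAlgebra.top_mul_span_singleton_mul_top_le_comap_degreeProj hr
      (TwoSidedIdeal.mem_top_mul_span_singleton_mul_top hmem)
  rw [FreeAlgebra.degreeProj_eq_self_of_mem hs] at hproj
  obtain ⟨γ, hγ⟩ := Submodule.mem_span_singleton.mp hproj
  exact ⟨γ, hγ.symm⟩

/-- If `r` is a nonzero homogeneous element of degree `d` of the free algebra `F⟨X⟩`, then
every homogeneous element `s` of degree `d` lying in the two-sided ideal generated by `r`
is a scalar multiple of `r`. -/
theorem homogeneous_mem_span_singleton
    (F : Type) [Field F] (X : Type) (d : ℕ) (r s : FreeAlgebra F X)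
    (hr0 : r ≠ 0) (hr : r ∈ homogeneousComponent F X d)
    (hs : s ∈ homogeneousComponent F X d)
    (hmem : s ∈ TwoSidedIdeal.span ({r} : Set (FreeAlgebra F X))) :
    ∃ γ : F, s = γ • r :=
  homogeneous_mem_span_singleton_general F X d r s hr hs hmem
end

section
/- Let F be a field of characteristic different from 2, let α, β, γ ∈ F, and let Q be an invertible 2×2 matrix over F. If Qᵀ · [[1, β], [0, 1]] · Q = γ · [[1, α], [0, 1]] (an equality of 2×2 matrices, where Qᵀ is the transpose of Q), then β = α or β = −α. -/
/-- Over a field of characteristic `≠ 2`: if `Q` is an invertible `2×2` matrix and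
`Qᵀ · [[1, β], [0, 1]] · Q = γ • [[1, α], [0, 1]]`, then `β = α` or `β = -α`. -/
theorem eq_or_eq_neg_of_congruent_matrices
    (F : Type) [Field F] (hchar : ringChar F ≠ 2) (α β γ : F)
    (Q : Matrix (Fin 2) (Fin 2) F) (hQ : Q.det ≠ 0)
    (h : Q.transpose * !![1, β; 0, 1] * Q = γ • !![1, α; 0, 1]) :
    β = α ∨ β = -α := by
  have hdet : Q.det ^ 2 = γ ^ 2 := by
    have := congrArg Matrix.det h
    simp [Matrix.det_mul, Matrix.det_transpose, Matrix.det_smul,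
      Matrix.det_fin_two_of, Fintype.card_fin] at this
    ring_nf at this ⊢
    linear_combination this
  have h01 := congrFun (congrFun h 0) 1
  have h10 := congrFun (congrFun h 1) 0
  simp [Matrix.mul_apply, Matrix.transpose_apply, Fin.sum_univ_two,
    Matrix.smul_apply, smul_eq_mul] at h01 h10
  have hkey : β * Q.det = γ * α := by
    rw [Matrix.det_fin_two]
    linear_combination h01 - h10
  have hsq : β ^ 2 = α ^ 2 := by
    have hγ : γ ≠ 0 := by
      intro hg
      apply hQ
      have : Q.det ^ 2 = 0 := by rw [hdet, hg]; ring
      exact pow_eq_zero_iff (n := 2) (by norm_num) |>.mp this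
    have : β ^ 2 * γ ^ 2 = γ ^ 2 * α ^ 2 := by
      linear_combination (β * Q.det + γ * α) * hkey - β ^ 2 * hdet
    have := mul_right_cancel₀ (pow_ne_zero 2 hγ) (by linear_combination this :
      β ^ 2 * γ ^ 2 = α ^ 2 * γ ^ 2)
    exact this
  have : (β - α) * (β + α) = 0 := by ring_nf; linear_combination hsq
  rcases mul_eq_zero.mp this with h' | h'
  · left; linear_combination h'
  · right; linear_combination h'
end

section
/- Let F be a field, α ∈ F, and let ε : A_α → F be the augmentation homomorphism (the F-algebra map sending the images of x₁ and x₂ to 0), with M = ker ε. Then: (1) the F-vector space M/M² is 2-dimensional, with basis the images of x̄₁ and x̄₂ (the classes of the generators); and (2) if y₁, y₂ generate A_α as a unital F-algebra, then the images of y₁ − ε(y₁)·1 and y₂ − ε(y₂)·1 in M/M² form a basis of M/M² (equivalently, the 2×2 matrix of coefficients of the linear parts of y₁, y₂ is nonsingular). -/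
/-- The defining relation `x₁² + x₂² + α·x₁x₂` of the algebra `A_α`. -/
abbrev relElem (F : Type) [Field F] (α : F) : FreeAlgebra F (Fin 2) :=
  FreeAlgebra.ι F (0 : Fin 2) * FreeAlgebra.ι F 0 + FreeAlgebra.ι F 1 * FreeAlgebra.ι F 1
    + α • (FreeAlgebra.ι F 0 * FreeAlgebra.ι F 1)

/-- `A_α = F⟨x₁,x₂ ∣ x₁² + x₂² + α·x₁x₂ = 0⟩`. -/
abbrev Aalg (F : Type) [Field F] (α : F) : Type :=
  (TwoSidedIdeal.span {relElem F α}).ringCon.Quotient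

/-- The quotient map `F⟨x₁,x₂⟩ → A_α`. -/
abbrev AalgMk (F : Type) [Field F] (α : F) : FreeAlgebra F (Fin 2) →+* Aalg F α :=
  (TwoSidedIdeal.span {relElem F α}).ringCon.mk'


/-!
For any augmented algebra `ε : A → F` generated by a set `s`, an induction over `adjoin s` using
`xy - ε(xy) = (x - εx)(y - εy) + εx (y - εy) + εy (x - εx)` shows that `M/M²` is spanned by the
classes of `y - ε(y)` for `y ∈ s`. For `A_α` this gives the spanning statements, and the lower bound
`dim M/M² ≥ 2` comes from the algebra map `A_α → F ⊕ F²` (square-zero extension) sending `x̄ᵢ` to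
`eᵢ`, which exists because the defining relation is homogeneous quadratic; its second component
kills `M²`. A spanning pair of a 2-dimensional space is then a basis.
-/

open Submodule

section Augmentation

variable {R A : Type*} [CommRing R] [Ring A] [Algebra R A] (ε : A →ₐ[R] R)

local notation "I" => LinearMap.ker ε.toLinearMap

lemma AlgHom.sub_smul_one_mem_ker (y : A) : y - ε y • 1 ∈ I := by
  simp

lemma AlgHom.sub_smul_one_mem_span_sup_of_mem_adjoin {s : Set A} {x : A}
    (hx : x ∈ Algebra.adjoin R s) :
    x - ε x • 1 ∈ span R ((fun y ↦ y - ε y • 1) '' s) ⊔ I * I := by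
  have hI : span R ((fun y ↦ y - ε y • 1) '' s) ⊔ I * I ≤ I :=
    sup_le (span_le.2 (by rintro _ ⟨y, -, rfl⟩; exact ε.sub_smul_one_mem_ker y))
      (mul_le.2 fun a _ b hb ↦ by simp_all)
  induction hx using Algebra.adjoin_induction with
  | mem y hy => exact mem_sup_left (subset_span ⟨y, hy, rfl⟩)
  | algebraMap r => simp [Algebra.algebraMap_eq_smul_one]
  | add x y _ _ hx hy =>
    convert add_mem hx hy using 1
    simp only [map_add, add_smul]
    abel
  | mul x y _ _ hx hy =>
    have hxy : x * y - ε (x * y) • 1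
        = (x - ε x • 1) * (y - ε y • 1) + ε x • (y - ε y • 1) + ε y • (x - ε x • 1) := by
      simp only [map_mul, sub_mul, mul_sub, smul_mul_assoc, mul_smul_comm, one_mul, mul_one,
        smul_sub, smul_smul, mul_comm (ε y)]
      abel
    rw [hxy]
    exact add_mem (add_mem (mem_sup_right (mul_mem_mul (hI hx) (hI hy))) (smul_mem _ _ hy))
      (smul_mem _ _ hx)

theorem AlgHom.map_mkQ_ker_eq_span_of_adjoin_eq_top {s : Set A}
    (hs : Algebra.adjoin R s = ⊤) :
    map (I * I).mkQ I = span R ((fun y ↦ (I * I).mkQ (y - ε y • 1)) '' s) := by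
  apply le_antisymm
  · rintro _ ⟨x, hx, rfl⟩
    have hεx : ε x = 0 := hx
    have hxs : x ∈ Algebra.adjoin R s := hs ▸ Algebra.mem_top
    have hmem := ε.sub_smul_one_mem_span_sup_of_mem_adjoin hxs
    rw [hεx, zero_smul, sub_zero] at hmem
    have hmap := mem_map_of_mem (f := (I * I).mkQ) hmem
    rwa [Submodule.map_sup, mkQ_map_self, sup_bot_eq, map_span, ← Set.image_comp] at hmap
  · rw [span_le]
    rintro _ ⟨y, -, rfl⟩
    exact mem_map_of_mem (ε.sub_smul_one_mem_ker y)

end Augmentation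

section SquareZero

variable {R A N : Type*} [CommRing R] [Ring A] [Algebra R A] [AddCommGroup N] [Module R N]
  [Module Rᵐᵒᵖ N] [IsCentralScalar R N]

lemma TrivSqZeroExt.ker_mul_ker_le_ker_snd_comp {ε : A →ₐ[R] R} {ψ : A →ₐ[R] TrivSqZeroExt R N}
    (hψ : (TrivSqZeroExt.fstHom R R N).comp ψ = ε) :
    LinearMap.ker ε.toLinearMap * LinearMap.ker ε.toLinearMap
      ≤ LinearMap.ker (TrivSqZeroExt.sndHom R N ∘ₗ ψ.toLinearMap) := by
  subst hψ
  refine mul_le.2 fun a (ha : (ψ a).fst = 0) b (hb : (ψ b).fst = 0) ↦ ?_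
  simp [TrivSqZeroExt.snd_mul, ha, hb]

end SquareZero

section Aalg

variable (F : Type) [Field F] (α : F)

noncomputable def FreeAlgebra.linearTruncation :
    FreeAlgebra F (Fin 2) →ₐ[F] TrivSqZeroExt F (Fin 2 → F) :=
  FreeAlgebra.lift F fun i ↦ TrivSqZeroExt.inr (Pi.single i 1)

lemma FreeAlgebra.linearTruncation_relElem :
    FreeAlgebra.linearTruncation F (relElem F α) = 0 := by
  simp [FreeAlgebra.linearTruncation, TrivSqZeroExt.inr_mul_inr]

noncomputable def Aalg.linearTruncation : Aalg F α →ₐ[F] TrivSqZeroExt F (Fin 2 → F) :=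
  RingCon.liftₐ _ (FreeAlgebra.linearTruncation F) <| TwoSidedIdeal.ringCon_le_iff.1 <|
    TwoSidedIdeal.span_le.2 <| Set.singleton_subset_iff.2 <|
      (TwoSidedIdeal.mem_ker _).2 (FreeAlgebra.linearTruncation_relElem F α)

lemma Aalg.linearTruncation_mk_ι (i : Fin 2) :
    Aalg.linearTruncation F α (AalgMk F α (FreeAlgebra.ι F i))
      = TrivSqZeroExt.inr (Pi.single i 1) := by
  simp [Aalg.linearTruncation, FreeAlgebra.linearTruncation]

lemma Aalg.adjoin_generators_eq_top :
    Algebra.adjoin F {AalgMk F α (FreeAlgebra.ι F 0), AalgMk F α (FreeAlgebra.ι F 1)} = ⊤ := by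
  have := congrArg (Subalgebra.map (RingCon.mkₐ F (TwoSidedIdeal.span {relElem F α}).ringCon))
    (FreeAlgebra.adjoin_range_ι F (Fin 2))
  rw [AlgHom.map_adjoin, Algebra.map_top, RingCon.range_mkₐ, ← Set.range_comp] at this
  convert this
  ext; simp [Fin.exists_fin_two, eq_comm]

lemma Aalg.linearIndependent_mkQ_generators {K : Submodule F (Aalg F α)}
    (hK : K ≤ LinearMap.ker
      (TrivSqZeroExt.sndHom F (Fin 2 → F) ∘ₗ (Aalg.linearTruncation F α).toLinearMap)) :
    LinearIndependent F
      ![K.mkQ (AalgMk F α (FreeAlgebra.ι F 0)), K.mkQ (AalgMk F α (FreeAlgebra.ι F 1))] := by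
  refine LinearIndependent.of_comp (K.liftQ _ hK) ?_
  have : K.liftQ _ hK ∘ ![K.mkQ (AalgMk F α (FreeAlgebra.ι F 0)),
      K.mkQ (AalgMk F α (FreeAlgebra.ι F 1))] = Pi.basisFun F (Fin 2) := by
    have h (i : Fin 2) : K.liftQ _ hK (K.mkQ (AalgMk F α (FreeAlgebra.ι F i))) = Pi.single i 1 :=
      congrArg TrivSqZeroExt.snd (Aalg.linearTruncation_mk_ι F α i)
    ext i : 1
    rw [Pi.basisFun_apply]
    fin_cases i
    exacts [h 0, h 1]
  rw [this]
  exact (Pi.basisFun F (Fin 2)).linearIndependent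

end Aalg

/-- Let `ε : A_α → F` be the augmentation (the `F`-algebra map killing the images `x̄₁, x̄₂`
of the generators), `M = ker ε` and `M²` the `F`-span of products of two elements of `M`.
Identifying `M/M²` with the image of `M` under the quotient map `A_α → A_α/M²`:
(1) `M/M²` is 2-dimensional with basis the images of `x̄₁, x̄₂`; and
(2) if `y₁, y₂` generate `A_α` as a unital `F`-algebra, then the images of
`y₁ - ε(y₁)·1` and `y₂ - ε(y₂)·1` in `M/M²` form a basis of `M/M²`. -/
theorem basis_of_augmentation_quotient (F : Type) [Field F] (α : F)
    (ε : Aalg F α →ₐ[F] F)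
    (hε0 : ε (AalgMk F α (FreeAlgebra.ι F 0)) = 0)
    (hε1 : ε (AalgMk F α (FreeAlgebra.ι F 1)) = 0)
    (M : Submodule F (Aalg F α)) (hM : M = LinearMap.ker ε.toLinearMap)
    (M2 : Submodule F (Aalg F α))
    (hM2 : M2 = Submodule.span F {x | ∃ a ∈ M, ∃ b ∈ M, x = a * b}) :
    -- (1) the images of `x̄₁, x̄₂` span the image of `M` in `A_α/M²`, are linearly
    -- independent, and `M/M²` is 2-dimensional
    (Submodule.map M2.mkQ M
        = Submodule.span F {M2.mkQ (AalgMk F α (FreeAlgebra.ι F 0)),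
            M2.mkQ (AalgMk F α (FreeAlgebra.ι F 1))} ∧
      LinearIndependent F ![M2.mkQ (AalgMk F α (FreeAlgebra.ι F 0)),
        M2.mkQ (AalgMk F α (FreeAlgebra.ι F 1))] ∧
      Module.finrank F (Submodule.map M2.mkQ M) = 2) ∧
    -- (2) for any unital algebra generators `y₁, y₂` of `A_α`, the images of
    -- `yᵢ - ε(yᵢ)·1` form a basis of `M/M²`
    (∀ y₁ y₂ : Aalg F α, Algebra.adjoin F ({y₁, y₂} : Set (Aalg F α)) = ⊤ →
      LinearIndependent F ![M2.mkQ (y₁ - ε y₁ • 1), M2.mkQ (y₂ - ε y₂ • 1)] ∧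
      Submodule.map M2.mkQ M
        = Submodule.span F {M2.mkQ (y₁ - ε y₁ • 1), M2.mkQ (y₂ - ε y₂ • 1)}) := by
  subst hM hM2
  set I := LinearMap.ker ε.toLinearMap
  have hsq : span F {x | ∃ a ∈ I, ∃ b ∈ I, x = a * b} = I * I := by
    rw [mul_eq_span_mul_set]
    congr 1
    ext
    simp [Set.mem_mul, eq_comm]
  rw [hsq]
  have hψ : (TrivSqZeroExt.fstHom F F (Fin 2 → F)).comp (Aalg.linearTruncation F α) = ε :=
    AlgHom.ext_of_adjoin_eq_top (Aalg.adjoin_generators_eq_top F α) <| by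
      rintro _ (rfl | rfl) <;>
        simp only [AlgHom.comp_apply, Aalg.linearTruncation_mk_ι, TrivSqZeroExt.fstHom_apply,
          TrivSqZeroExt.fst_inr, hε0, hε1]
  have hspan : ∀ y₁ y₂, Algebra.adjoin F {y₁, y₂} = ⊤ →
      map (I * I).mkQ I = span F {(I * I).mkQ (y₁ - ε y₁ • 1), (I * I).mkQ (y₂ - ε y₂ • 1)} := by
    intro y₁ y₂ h
    rw [ε.map_mkQ_ker_eq_span_of_adjoin_eq_top h, Set.image_pair]
  have hspan₀ := hspan _ _ (Aalg.adjoin_generators_eq_top F α)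
  simp only [hε0, hε1, zero_smul, sub_zero] at hspan₀
  have hind := Aalg.linearIndependent_mkQ_generators F α
    (TrivSqZeroExt.ker_mul_ker_le_ker_snd_comp hψ)
  have hrank : Module.finrank F (map (I * I).mkQ I) = 2 := by
    rw [hspan₀, ← Matrix.range_cons_cons_empty _ _ ![], finrank_span_eq_card hind]
    simp
  refine ⟨⟨hspan₀, hind, hrank⟩, fun y₁ y₂ hy ↦ ⟨?_, hspan y₁ y₂ hy⟩⟩
  rw [linearIndependent_iff_card_eq_finrank_span, Set.finrank, Matrix.range_cons_cons_empty,
    ← hspan y₁ y₂ hy, hrank]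
  simp
end

section
/- Let α ∈ ℂ be transcendental over ℚ. Then the orbit {σ(α) : σ a ring automorphism of ℂ} is an uncountable subset of ℂ. -/
open Cardinal

/-- Given two transcendence bases of `ℂ` over `ℚ` and a bijection of index types,
there is a ring automorphism of `ℂ` matching them at any given index. -/
theorem exists_ringEquiv_map_of_transcendenceBasis {ι κ : Type} (v : ι → ℂ) (w : κ → ℂ)
    (e : ι ≃ κ) (hv : IsTranscendenceBasis ℚ v) (hw : IsTranscendenceBasis ℚ w) (i : ι) :
    ∃ σ : ℂ ≃+* ℂ, σ (v i) = w (e i) := by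
  letI := IsAlgClosed.isAlgClosure_of_transcendence_basis v hv
  letI := IsAlgClosed.isAlgClosure_of_transcendence_basis w hw
  let er : MvPolynomial ι ℚ ≃ₐ[ℚ] MvPolynomial κ ℚ :=
    AlgEquiv.ofAlgHom (MvPolynomial.rename e) (MvPolynomial.rename e.symm)
      (by ext; simp) (by ext; simp)
  let eadj : Algebra.adjoin ℚ (Set.range v) ≃+* Algebra.adjoin ℚ (Set.range w) :=
    hv.1.aevalEquiv.symm.toRingEquiv.trans (er.toRingEquiv.trans hw.1.aevalEquiv.toRingEquiv)
  refine ⟨IsAlgClosure.equivOfEquiv ℂ ℂ eadj, ?_⟩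
  have hvi : v i = algebraMap (Algebra.adjoin ℚ (Set.range v)) ℂ
      (hv.1.aevalEquiv (MvPolynomial.X i)) := by
    rw [hv.1.algebraMap_aevalEquiv, MvPolynomial.aeval_X]
  rw [hvi, IsAlgClosure.equivOfEquiv_algebraMap]
  have : eadj (hv.1.aevalEquiv (MvPolynomial.X i))
      = hw.1.aevalEquiv (MvPolynomial.X (e i)) := by
    show hw.1.aevalEquiv (er (hv.1.aevalEquiv.symm (hv.1.aevalEquiv (MvPolynomial.X i)))) = _
    rw [AlgEquiv.symm_apply_apply]
    congr 1
    show MvPolynomial.rename e (MvPolynomial.X i) = _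
    simp
  rw [this, hw.1.algebraMap_aevalEquiv, MvPolynomial.aeval_X]

/-- Any transcendental number can be extended to a transcendence basis. -/
theorem exists_transcendenceBasis_mem (β : ℂ) (hβ : Transcendental ℚ β) :
    ∃ u : Set ℂ, β ∈ u ∧ IsTranscendenceBasis ℚ ((↑) : u → ℂ) := by
  have hs : AlgebraicIndependent ℚ ((↑) : ({β} : Set ℂ) → ℂ) := by
    rw [algebraicIndependent_unique_type_iff]
    simpa using hβ
  obtain ⟨u, hsu, hmax⟩ := exists_maximal_algebraicIndependent ({β} : Set ℂ) Set.univ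
    (Set.subset_univ _) hs
  refine ⟨u, hsu rfl, hmax.1.1, fun t ht hut => ?_⟩
  simp only [Subtype.range_coe_subtype, Set.setOf_mem_eq] at *
  exact hmax.eq_of_le ⟨ht, Set.subset_univ _⟩ hut

/-- Cardinality of a transcendence basis of `ℂ` over `ℚ` is that of `ℂ`. -/
theorem mk_transcendenceBasis_complex {u : Set ℂ} (hne : u.Nonempty)
    (hu : IsTranscendenceBasis ℚ ((↑) : u → ℂ)) : #u = #ℂ := by
  haveI : Nonempty u := hne.to_subtype
  have h := hu.lift_cardinalMk_eq_max_lift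
  simp only [Cardinal.lift_id] at h
  have hq : #ℚ ≤ ℵ₀ := Cardinal.mk_le_aleph0
  have hc : ℵ₀ < #ℂ := by
    rw [mk_complex]
    exact Cardinal.aleph0_lt_continuum
  rcases le_total (#u) ℵ₀ with hle | hle
  · exfalso
    have : #ℂ ≤ ℵ₀ := by
      rw [h]
      simp [sup_le_iff, hq, hle]
    exact absurd this (not_le.2 hc)
  · rw [h]
    rw [sup_eq_right.2 (hq.trans hle), sup_eq_left.2 hle]

theorem exists_ringEquiv_of_transcendental (α β : ℂ) (hα : Transcendental ℚ α)
    (hβ : Transcendental ℚ β) : ∃ σ : ℂ ≃+* ℂ, σ α = β := by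
  obtain ⟨u, hαu, hu⟩ := exists_transcendenceBasis_mem α hα
  obtain ⟨t, hβt, ht⟩ := exists_transcendenceBasis_mem β hβ
  have hcard : #u = #t := by
    rw [mk_transcendenceBasis_complex ⟨α, hαu⟩ hu, mk_transcendenceBasis_complex ⟨β, hβt⟩ ht]
  obtain ⟨e⟩ := Cardinal.eq.1 hcard
  let e' : u ≃ t := e.trans (Equiv.swap (e ⟨α, hαu⟩) ⟨β, hβt⟩)
  obtain ⟨σ, hσ⟩ := exists_ringEquiv_map_of_transcendenceBasis _ _ e' hu ht ⟨α, hαu⟩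
  refine ⟨σ, ?_⟩
  rw [hσ]
  show ((e.trans (Equiv.swap (e ⟨α, hαu⟩) ⟨β, hβt⟩)) ⟨α, hαu⟩ : ℂ) = β
  simp

theorem countable_algebraic_complex : Set.Countable {x : ℂ | IsAlgebraic ℚ x} := by
  have hsub : {x : ℂ | IsAlgebraic ℚ x} ⊆ ⋃ p : Polynomial ℚ, p.rootSet ℂ := by
    rintro x ⟨p, hp, hpx⟩
    exact Set.mem_iUnion.2 ⟨p, Polynomial.mem_rootSet.2 ⟨hp, hpx⟩⟩
  haveI : Countable (Polynomial ℚ) := by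
    rw [← Cardinal.mk_le_aleph0_iff]
    exact Polynomial.cardinalMk_le_max.trans (by simp [Cardinal.mk_le_aleph0])
  exact Set.Countable.mono hsub
    (Set.countable_iUnion fun p => (p.rootSet ℂ).toFinite.countable)

/-- If `α ∈ ℂ` is transcendental over `ℚ`, then its orbit under the group of ring
automorphisms of `ℂ` is uncountable. -/
theorem orbit_of_transcendental_uncountable (α : ℂ) (hα : Transcendental ℚ α) :
    ¬ Set.Countable {x : ℂ | ∃ σ : ℂ ≃+* ℂ, σ α = x} := by
  intro hcount
  have huniv : (Set.univ : Set ℂ) ⊆ {x : ℂ | IsAlgebraic ℚ x} ∪ {x : ℂ | ∃ σ : ℂ ≃+* ℂ, σ α = x} := by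
    intro x _
    by_cases h : IsAlgebraic ℚ x
    · exact Or.inl h
    · exact Or.inr (exists_ringEquiv_of_transcendental α x hα h)
  have : Set.Countable (Set.univ : Set ℂ) :=
    Set.Countable.mono huniv (countable_algebraic_complex.union hcount)
  exact not_countable_complex this
end
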